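/- arXiv:math/0008117 — 4 statements merged into one kernel-verified Lean document; each statement's English description precedes it below -/
import Mathlib

section
/- Let g : 𝒞 → 𝒟 be a morphism of crossed modules of groupoids 𝒞 = (C, G, δ) over X and 𝒟 = (D, H, δ'), let (s₀, s₁) be a homotopy on g, and define f₁(a) = s₀(α(a)) + g₁(a) + δ'(s₁(a)) - s₀(β(a)) for a ∈ G. Then f₁ preserves composition: f₁(a + b) = f₁(a) + f₁(b) whenever a + b is defined in G. -/
open CategoryTheory

/-- A crossed module of groupoids `(C, G, δ)` over the object type `X`.
The groupoid `G` is encoded by a `Groupoid` structure on `X` (arrows `x ⟶ y`,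
composition `a ≫ b` corresponding to the additive composition `a + b` of the paper,
with source `α` and target `β` built into the typing).
`C` is the totally intransitive groupoid, i.e. a family of groups `C x`
(written multiplicatively; the paper writes them additively). -/
structure XMod (X : Type*) [Groupoid X] where
  /-- the family of groups `C x` -/
  C : X → Type*
  grp : ∀ x : X, Group (C x)
  /-- the right action `c ^ a` of `G` on `C` -/
  act : ∀ {x y : X}, C x → (x ⟶ y) → C y
  act_mul : ∀ {x y : X} (c c' : C x) (a : x ⟶ y), act (c * c') a = act c a * act c' a
  act_comp : ∀ {x y z : X} (c : C x) (a : x ⟶ y) (b : y ⟶ z), act c (a ≫ b) = act (act c a) b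
  act_id : ∀ {x : X} (c : C x), act c (𝟙 x) = c
  /-- the boundary `δ : C x → G(x,x)` -/
  δ : ∀ {x : X}, C x → (x ⟶ x)
  δ_mul : ∀ {x : X} (c c' : C x), δ (c * c') = δ c ≫ δ c'
  δ_act : ∀ {x y : X} (c : C x) (a : x ⟶ y), δ (act c a) = Groupoid.inv a ≫ δ c ≫ a
  peiffer : ∀ {x : X} (c c' : C x), act c (δ c') = c'⁻¹ * c * c'

attribute [instance] XMod.grp

/-- A morphism `g = (g₀, g₁, g₂) : 𝒞 → 𝒟` of crossed modules of groupoids: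
a functor `(g₀, g₁) : G → H` together with a family of group homomorphisms
`g₂ : C x → D (g₀ x)` commuting with `δ` and the actions. -/
structure XModHom {X : Type*} {Y : Type*} [Groupoid X] [Groupoid Y]
    (𝒞 : XMod X) (𝒟 : XMod Y) where
  F : X ⥤ Y
  map₂ : ∀ {x : X}, 𝒞.C x → 𝒟.C (F.obj x)
  map₂_mul : ∀ (x : X) (c c' : 𝒞.C x), map₂ (c * c') = map₂ c * map₂ c'
  map₂_δ : ∀ (x : X) (c : 𝒞.C x), 𝒟.δ (map₂ c) = F.map (𝒞.δ c)
  map₂_act : ∀ (x y : X) (c : 𝒞.C x) (a : x ⟶ y),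
    map₂ (𝒞.act c a) = 𝒟.act (map₂ c) (F.map a)

/-- A homotopy `(s₀, s₁)` on a morphism `g : 𝒞 → 𝒟` of crossed modules of groupoids:
`s₀ : X → H` with `β (s₀ x) = g₀ x` (the source `α (s₀ x)` being denoted `f₀ x`),
and `s₁ : G → D`, a `g`-derivation: `s₁ a ∈ D (β (g₁ a))` and
`s₁ (a + b) = (s₁ a) ^ (g₁ b) + s₁ b`. -/
structure XModHomotopy {X : Type*} {Y : Type*} [Groupoid X] [Groupoid Y]
    {𝒞 : XMod X} {𝒟 : XMod Y} (g : XModHom 𝒞 𝒟) where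
  f₀ : X → Y
  s₀ : ∀ x : X, f₀ x ⟶ g.F.obj x
  s₁ : ∀ {x y : X}, (x ⟶ y) → 𝒟.C (g.F.obj y)
  s₁_comp : ∀ (x y z : X) (a : x ⟶ y) (b : y ⟶ z),
    s₁ (a ≫ b) = 𝒟.act (s₁ a) (g.F.map b) * s₁ b

namespace XModHomotopy

variable {X : Type*} {Y : Type*} [Groupoid X] [Groupoid Y]
  {𝒞 : XMod X} {𝒟 : XMod Y} {g : XModHom 𝒞 𝒟}

/-- `f₁ a = s₀ (α a) + g₁ a + δ' (s₁ a) - s₀ (β a)`  (note `f₀ x = α (s₀ x)`). -/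
def map₁ (s : XModHomotopy g) {x y : X} (a : x ⟶ y) : s.f₀ x ⟶ s.f₀ y :=
  s.s₀ x ≫ g.F.map a ≫ 𝒟.δ (s.s₁ a) ≫ Groupoid.inv (s.s₀ y)

/-- `f₂ c = (g₂ c + s₁ (δ c)) ^ (- s₀ (β c))`. -/
def map₂ (s : XModHomotopy g) {x : X} (c : 𝒞.C x) : 𝒟.C (s.f₀ x) :=
  𝒟.act (g.map₂ c * s.s₁ (𝒞.δ c)) (Groupoid.inv (s.s₀ x))

end XModHomotopy

/-- Let `g : 𝒞 → 𝒟` be a morphism of crossed modules of groupoids,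
`(s₀, s₁)` a homotopy on `g`, and define
`f₁ a = s₀ (α a) + g₁ a + δ' (s₁ a) - s₀ (β a)`.
Then `f₁` preserves composition: `f₁ (a + b) = f₁ a + f₁ b` whenever `a + b` is defined. -/
theorem homotopy_map₁_comp {X : Type*} {Y : Type*} [Groupoid X] [Groupoid Y]
    {𝒞 : XMod X} {𝒟 : XMod Y} (g : XModHom 𝒞 𝒟) (s : XModHomotopy g) :
    ∀ (x y z : X) (a : x ⟶ y) (b : y ⟶ z), s.map₁ (a ≫ b) = s.map₁ a ≫ s.map₁ b := by
  intro x y z a b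
  simp [XModHomotopy.map₁, s.s₁_comp, 𝒟.δ_mul, 𝒟.δ_act]
end

section
/- Let g : 𝒞 → 𝒟 be a morphism of crossed modules of groupoids 𝒞 = (C, G, δ) over X and 𝒟 = (D, H, δ'), let (s₀, s₁) be a homotopy on g, and define f₁(a) = s₀(α(a)) + g₁(a) + δ'(s₁(a)) - s₀(β(a)) and f₂(c) = (g₂(c) + s₁(δ(c)))^{-s₀(β(c))}. Then for all c ∈ C(x) and a ∈ G(x,y) one has f₂(c^a) = f₂(c)^{f₁(a)}. -/
open CategoryTheory

/-!
Conjugation by `s₀` cancels on both sides, so the theorem reduces to the equivariance of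
`c ↦ g₂ c + s₁ (δ c)` along the twisted arrows `a ↦ g₁ a + δ' (s₁ a)`. The derivation rule
expands `s₁ (δ (c ^ a)) = s₁ (-a + δ c + a)`, and the Peiffer identity in `𝒟`, applied to
`g₁ (δ (c ^ a)) = δ' (g₂ (c ^ a))`, turns the resulting action into a conjugation; both sides
then equal the conjugate of `(g₂ c + s₁ (δ c)) ^ (g₁ a)` by `s₁ a`.
-/

namespace XMod

variable {X : Type*} [Groupoid X] (𝒞 : XMod X)

lemma act_inv {x y : X} (c : 𝒞.C x) (a : x ⟶ y) : 𝒞.act c⁻¹ a = (𝒞.act c a)⁻¹ :=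
  (MonoidHom.mk' (𝒞.act · a) (𝒞.act_mul · · a)).map_inv c

lemma act_act_inv_comp {x y z : X} (c : 𝒞.C y) (p : x ⟶ y) (q : y ⟶ z) :
    𝒞.act (𝒞.act c (Groupoid.inv p)) (p ≫ q) = 𝒞.act c q := by
  rw [← 𝒞.act_comp, ← Category.assoc, Groupoid.inv_comp, Category.id_comp]

end XMod

namespace XModHomotopy

variable {X : Type*} {Y : Type*} [Groupoid X] [Groupoid Y]
  {𝒞 : XMod X} {𝒟 : XMod Y} {g : XModHom 𝒞 𝒟} (s : XModHomotopy g)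

lemma s₁_id (x : X) : s.s₁ (𝟙 x) = 1 := by
  have h := s.s₁_comp x x x (𝟙 x) (𝟙 x)
  rw [Category.comp_id, g.F.map_id, 𝒟.act_id] at h
  exact right_eq_mul.mp h

lemma s₁_inv {x y : X} (a : x ⟶ y) :
    s.s₁ (Groupoid.inv a) = 𝒟.act (s.s₁ a)⁻¹ (g.F.map (Groupoid.inv a)) := by
  have h := s.s₁_comp x y x a (Groupoid.inv a)
  rw [Groupoid.comp_inv, s.s₁_id] at h
  rw [eq_inv_of_mul_eq_one_right h.symm, XMod.act_inv]

lemma s₁_conj {x y : X} (a : x ⟶ y) (b : x ⟶ x) :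
    s.s₁ (Groupoid.inv a ≫ b ≫ a) =
      𝒟.act (s.s₁ a)⁻¹ (g.F.map (Groupoid.inv a ≫ b ≫ a)) *
        𝒟.act (s.s₁ b) (g.F.map a) * s.s₁ a := by
  rw [s.s₁_comp _ _ _ (Groupoid.inv a) (b ≫ a), s.s₁_comp _ _ _ b a, s.s₁_inv,
    ← 𝒟.act_comp, ← g.F.map_comp, mul_assoc]

lemma map₂_mul_s₁_δ_act {x y : X} (c : 𝒞.C x) (a : x ⟶ y) :
    g.map₂ (𝒞.act c a) * s.s₁ (𝒞.δ (𝒞.act c a)) =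
      𝒟.act (g.map₂ c * s.s₁ (𝒞.δ c)) (g.F.map a ≫ 𝒟.δ (s.s₁ a)) := by
  have h_s₁_δ : s.s₁ (𝒞.δ (𝒞.act c a)) =
      (g.map₂ (𝒞.act c a))⁻¹ * (s.s₁ a)⁻¹ * g.map₂ (𝒞.act c a) *
        𝒟.act (s.s₁ (𝒞.δ c)) (g.F.map a) * s.s₁ a := by
    rw [𝒞.δ_act, s.s₁_conj, ← 𝒞.δ_act, ← g.map₂_δ, 𝒟.peiffer]
  rw [h_s₁_δ, 𝒟.act_comp, 𝒟.peiffer, 𝒟.act_mul, ← g.map₂_act]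
  group

end XModHomotopy

/-- Let `g : 𝒞 → 𝒟` be a morphism of crossed modules of groupoids,
`(s₀, s₁)` a homotopy on `g`, and define
`f₁ a = s₀ (α a) + g₁ a + δ' (s₁ a) - s₀ (β a)` and
`f₂ c = (g₂ c + s₁ (δ c)) ^ (- s₀ (β c))`.
Then for all `c ∈ C x` and `a : x ⟶ y` one has `f₂ (c ^ a) = (f₂ c) ^ (f₁ a)`. -/
theorem homotopy_map₂_act {X : Type*} {Y : Type*} [Groupoid X] [Groupoid Y]
    {𝒞 : XMod X} {𝒟 : XMod Y} (g : XModHom 𝒞 𝒟) (s : XModHomotopy g) :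
    ∀ (x y : X) (c : 𝒞.C x) (a : x ⟶ y),
      s.map₂ (𝒞.act c a) = 𝒟.act (s.map₂ c) (s.map₁ a) := by
  intro x y c a
  rw [XModHomotopy.map₂, XModHomotopy.map₂, XModHomotopy.map₁, XMod.act_act_inv_comp,
    s.map₂_mul_s₁_δ_act, ← 𝒟.act_comp, Category.assoc]
end

section
/- Let 𝒞 = (C, G, δ) be a crossed module of groupoids over X, let s and t be free derivations on 𝒞, and let g = Δ(t). Define (s*t)₀(x) = s₀(g₀(x)) + t₀(x) and (s*t)₁(a) = t₁(a) + (s₁(g₁(a)))^{t₀(β(a))}. Then s*t is again a free derivation on 𝒞; in particular (s*t)₁(a+b) = ((s*t)₁(a))^b + (s*t)₁(b) whenever a + b is defined in G. -/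
open CategoryTheory

theorem XMod.act_one {X : Type*} [Groupoid X] {𝒞 : XMod X} {x y : X} (a : x ⟶ y) :
    𝒞.act (1 : 𝒞.C x) a = 1 := by
  have h := 𝒞.act_mul (1 : 𝒞.C x) 1 a
  rw [mul_one] at h
  exact left_eq_mul.mp h

/-- A free derivation `s = (s₀, s₁)` on the crossed module `𝒞`:
`s₀ : X → G` with `β (s₀ x) = x` (so `s₀ x : f₀ x ⟶ x`, where `f₀ x = α (s₀ x)`),
and `s₁ : G → C` with `s₁ a ∈ C (β a)` and `s₁ (a + b) = (s₁ a) ^ b + s₁ b`. -/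
structure FreeDer {X : Type*} [Groupoid X] (𝒞 : XMod X) where
  f₀ : X → X
  s₀ : ∀ x : X, f₀ x ⟶ x
  s₁ : ∀ {x y : X}, (x ⟶ y) → 𝒞.C y
  s₁_comp : ∀ (x y z : X) (a : x ⟶ y) (b : y ⟶ z),
    s₁ (a ≫ b) = 𝒞.act (s₁ a) b * s₁ b

namespace FreeDer

variable {X : Type*} [Groupoid X] {𝒞 : XMod X}

/-- the object part `f₀` of the associated endomorphism `Δ s` is `s.f₀`;
this is its arrow part `f₁`:  `f₁ a = s₀ (α a) + a + δ (s₁ a) - s₀ (β a)`. -/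
def Δ₁ (s : FreeDer 𝒞) {x y : X} (a : x ⟶ y) : s.f₀ x ⟶ s.f₀ y :=
  s.s₀ x ≫ a ≫ 𝒞.δ (s.s₁ a) ≫ Groupoid.inv (s.s₀ y)

/-- the `C`-part `f₂` of the associated endomorphism `Δ s`:
`f₂ c = (c * s₁ (δ c)) ^ (- s₀ (β c))`. -/
def Δ₂ (s : FreeDer 𝒞) {x : X} (c : 𝒞.C x) : 𝒞.C (s.f₀ x) :=
  𝒞.act (c * s.s₁ (𝒞.δ c)) (Groupoid.inv (s.s₀ x))

/-- the `s₁`-component of the product `s * t` of free derivations: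
`(s*t)₁ a = t₁ a + (s₁ (g₁ a)) ^ (t₀ (β a))` where `g = Δ t`. -/
def mulS₁ (s t : FreeDer 𝒞) {x y : X} (a : x ⟶ y) : 𝒞.C y :=
  t.s₁ a * 𝒞.act (s.s₁ (t.Δ₁ a)) (t.s₀ y)

end FreeDer

theorem XMod.act_comp_δ {X : Type*} [Groupoid X] (𝒞 : XMod X) {x y : X} (c : 𝒞.C x)
    (a : x ⟶ y) (d : 𝒞.C y) :
    𝒞.act c (a ≫ 𝒞.δ d) = d⁻¹ * 𝒞.act c a * d := by
  rw [𝒞.act_comp, 𝒞.peiffer]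

namespace FreeDer

variable {X : Type*} [Groupoid X] {𝒞 : XMod X} (t : FreeDer 𝒞)

theorem Δ₁_comp {x y z : X} (a : x ⟶ y) (b : y ⟶ z) :
    t.Δ₁ (a ≫ b) = t.Δ₁ a ≫ t.Δ₁ b := by
  simp only [Δ₁, t.s₁_comp, 𝒞.δ_mul, 𝒞.δ_act, Category.assoc,
    Groupoid.inv_eq_inv, IsIso.hom_inv_id_assoc, IsIso.inv_hom_id_assoc]

theorem Δ₁_comp_s₀ {x y : X} (a : x ⟶ y) :
    t.Δ₁ a ≫ t.s₀ y = t.s₀ x ≫ a ≫ 𝒞.δ (t.s₁ a) := by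
  simp only [Δ₁, Category.assoc, Groupoid.inv_comp, Category.comp_id]

end FreeDer

/-- Let `𝒞` be a crossed module of groupoids, `s, t` free derivations
on `𝒞` and `g = Δ t`.  Define `(s*t)₀ x = s₀ (g₀ x) + t₀ x` (in the typed setting this
is the composite `s₀ (g₀ x) ≫ t₀ x : s.f₀ (t.f₀ x) ⟶ x`, so that `β ((s*t)₀ x) = x`
automatically) and `(s*t)₁ a = t₁ a + (s₁ (g₁ a)) ^ (t₀ (β a))`.
Then `s*t` is again a free derivation on `𝒞`; in particular
`(s*t)₁ (a + b) = ((s*t)₁ a) ^ b + (s*t)₁ b` whenever `a + b` is defined. -/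
theorem mul_is_freeDerivation {X : Type*} [Groupoid X] {𝒞 : XMod X}
    (s t : FreeDer 𝒞) :
    ∀ (x y z : X) (a : x ⟶ y) (b : y ⟶ z),
      s.mulS₁ t (a ≫ b) = 𝒞.act (s.mulS₁ t a) b * s.mulS₁ t b := by
  intro x y z a b
  -- transporting `s₁ (g₁ a)` along `g₁ b ≫ t₀ z` differs from transporting it along
  -- `t₀ y ≫ b` by conjugation with `t₁ b`, which cancels against the `t₁ b` of `t₁ (a ≫ b)`
  have transport : 𝒞.act (s.s₁ (t.Δ₁ a)) (t.Δ₁ b ≫ t.s₀ z) =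
      (t.s₁ b)⁻¹ * 𝒞.act (𝒞.act (s.s₁ (t.Δ₁ a)) (t.s₀ y)) b * t.s₁ b := by
    rw [t.Δ₁_comp_s₀, ← Category.assoc, 𝒞.act_comp_δ, 𝒞.act_comp]
  rw [FreeDer.mulS₁, FreeDer.mulS₁, FreeDer.mulS₁, t.s₁_comp, t.Δ₁_comp, s.s₁_comp, 𝒞.act_mul,
    ← 𝒞.act_comp, transport, 𝒞.act_mul]
  group
end

section
/- Let 𝒜 = (A₂, A₁, δ) be a braided regular crossed module with group of objects A₀ (identity e), and let K = {a ∈ A₁ : β(a) = e} be the costar at e. Then the operation a·b = b + (a.α(b)) makes K a group with identity the identity arrow 1_e, the source map α : K → A₀ is a group homomorphism, the vertex group A₁(e) is a subgroup of K (the kernel of α), and α is equivariant with respect to the diagonal action a^p = p⁻¹.a.p of A₀ on K and the conjugation action of A₀ on itself. -/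
open CategoryTheory

/-- A braided regular crossed module `𝒜 = (A₂, A₁, δ)`: a crossed module of
groupoids whose object set `A₀ = X` is a group (identity `e = 1`), together with
commuting left and right actions of `A₀` on `A₁` and on `A₂` (written `p.a`, `a.p`,
`p.c`, `c.p`; here `sL p a`, `sR a p`, `sL₂ p c`, `sR₂ c p`) by groupoid
automorphisms, compatible with `δ` and the crossed-module action, and a braiding
`{a, b} ∈ A₂ ((β a) * (β b))`.  The canonical identifications of objects coming from
the group laws of `A₀` are implemented by `eqToHom` (on `A₂` by transporting along
the identity arrow `𝒞.act _ (eqToHom _)`). -/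
structure Braided (X : Type*) [Groupoid X] [Group X] (𝒞 : XMod X) where
  sL : ∀ (p : X) {x y : X}, (x ⟶ y) → ((p * x) ⟶ (p * y))
  sR : ∀ {x y : X}, (x ⟶ y) → ∀ p : X, ((x * p) ⟶ (y * p))
  sL₂ : ∀ (p : X) {x : X}, 𝒞.C x → 𝒞.C (p * x)
  sR₂ : ∀ {x : X}, 𝒞.C x → ∀ p : X, 𝒞.C (x * p)
  -- the actions are actions of the group `A₀`:
  sL_one : ∀ (x y : X) (a : x ⟶ y),
    sL 1 a = eqToHom (one_mul x) ≫ a ≫ eqToHom (one_mul y).symm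
  sL_mul : ∀ (p q x y : X) (a : x ⟶ y),
    sL (p * q) a = eqToHom (mul_assoc p q x) ≫ sL p (sL q a) ≫ eqToHom (mul_assoc p q y).symm
  sR_one : ∀ (x y : X) (a : x ⟶ y),
    sR a 1 = eqToHom (mul_one x) ≫ a ≫ eqToHom (mul_one y).symm
  sR_mul : ∀ (p q x y : X) (a : x ⟶ y),
    sR a (p * q) = eqToHom (mul_assoc x p q).symm ≫ sR (sR a p) q ≫ eqToHom (mul_assoc y p q)
  sL₂_one : ∀ (x : X) (c : 𝒞.C x), sL₂ 1 c = 𝒞.act c (eqToHom (one_mul x).symm)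
  sL₂_mulA : ∀ (p q x : X) (c : 𝒞.C x),
    sL₂ (p * q) c = 𝒞.act (sL₂ p (sL₂ q c)) (eqToHom (mul_assoc p q x).symm)
  sR₂_one : ∀ (x : X) (c : 𝒞.C x), sR₂ c 1 = 𝒞.act c (eqToHom (mul_one x).symm)
  sR₂_mulA : ∀ (p q x : X) (c : 𝒞.C x),
    sR₂ c (p * q) = 𝒞.act (sR₂ (sR₂ c p) q) (eqToHom (mul_assoc x p q))
  -- the left and right actions commute:
  sLR : ∀ (p q x y : X) (a : x ⟶ y),
    sR (sL p a) q = eqToHom (mul_assoc p x q) ≫ sL p (sR a q) ≫ eqToHom (mul_assoc p y q).symm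
  sLR₂ : ∀ (p q x : X) (c : 𝒞.C x),
    sR₂ (sL₂ p c) q = 𝒞.act (sL₂ p (sR₂ c q)) (eqToHom (mul_assoc p x q).symm)
  -- each element of `A₀` acts by automorphisms of the groupoid `A₁` and of `A₂`:
  sL_comp : ∀ (p x y z : X) (a : x ⟶ y) (b : y ⟶ z), sL p (a ≫ b) = sL p a ≫ sL p b
  sL_id : ∀ (p x : X), sL p (𝟙 x) = 𝟙 (p * x)
  sR_comp : ∀ (p x y z : X) (a : x ⟶ y) (b : y ⟶ z), sR (a ≫ b) p = sR a p ≫ sR b p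
  sR_id : ∀ (p x : X), sR (𝟙 x) p = 𝟙 (x * p)
  sL₂_mul : ∀ (p x : X) (c c' : 𝒞.C x), sL₂ p (c * c') = sL₂ p c * sL₂ p c'
  sR₂_mul : ∀ (p x : X) (c c' : 𝒞.C x), sR₂ (c * c') p = sR₂ c p * sR₂ c' p
  -- the boundary `δ` is equivariant:
  δ_sL : ∀ (p x : X) (c : 𝒞.C x), 𝒞.δ (sL₂ p c) = sL p (𝒞.δ c)
  δ_sR : ∀ (p x : X) (c : 𝒞.C x), 𝒞.δ (sR₂ c p) = sR (𝒞.δ c) p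
  -- compatibility with the crossed-module action:  `z.(c^a) = (z.c)^(z.a)`, `(c^a).z = (c.z)^(a.z)`:
  sL₂_act : ∀ (p x y : X) (c : 𝒞.C x) (a : x ⟶ y),
    sL₂ p (𝒞.act c a) = 𝒞.act (sL₂ p c) (sL p a)
  sR₂_act : ∀ (p x y : X) (c : 𝒞.C x) (a : x ⟶ y),
    sR₂ (𝒞.act c a) p = 𝒞.act (sR₂ c p) (sR a p)
  /-- the braiding `{a, b} ∈ A₂ ((β a) * (β b))` -/
  brd : ∀ {x x' y y' : X}, (x ⟶ x') → (y ⟶ y') → 𝒞.C (x' * y')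
  brd_one_left : ∀ (y y' : X) (b : y ⟶ y'), brd (𝟙 (1 : X)) b = 1
  brd_one_right : ∀ (x x' : X) (a : x ⟶ x'), brd a (𝟙 (1 : X)) = 1
  -- `{a, b + b'} = {a, b} ^ (β a . b') + {a, b'}`:
  brd_add_right : ∀ (x x' y y' y'' : X) (a : x ⟶ x') (b : y ⟶ y') (b' : y' ⟶ y''),
    brd a (b ≫ b') = 𝒞.act (brd a b) (sL x' b') * brd a b'
  -- `{a + a', b} = {a', b} + {a, b} ^ (a' . β b)`:
  brd_add_left : ∀ (x x' x'' y y' : X) (a : x ⟶ x') (a' : x' ⟶ x'') (b : y ⟶ y'),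
    brd (a ≫ a') b = brd a' b * 𝒞.act (brd a b) (sR a' y')
  -- `δ {a, b} = -(β a . b) - (a . α b) + (α a . b) + (a . β b)`:
  brd_δ : ∀ (x x' y y' : X) (a : x ⟶ x') (b : y ⟶ y'),
    𝒞.δ (brd a b) =
      Groupoid.inv (sL x' b) ≫ Groupoid.inv (sR a y) ≫ sL x b ≫ sR a y'
  -- `{a, δ c'} = -(β a . c') + (α a . c') ^ (a . y)` for `c' ∈ A₂ y`:
  brd_δ_right : ∀ (x x' y : X) (a : x ⟶ x') (c' : 𝒞.C y),
    brd a (𝒞.δ c') = (sL₂ x' c')⁻¹ * 𝒞.act (sL₂ x c') (sR a y)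
  -- `{δ c, b} = -(c . α b) ^ (x . b) + c . β b` for `c ∈ A₂ x`:
  brd_δ_left : ∀ (x y y' : X) (c : 𝒞.C x) (b : y ⟶ y'),
    brd (𝒞.δ c) b = (𝒞.act (sR₂ c y) (sL x b))⁻¹ * sR₂ c y'
  -- `p.{a, b} = {p.a, b}`, `{a, b}.p = {a, b.p}`, `{a.p, b} = {a, p.b}`:
  brd_sL : ∀ (p x x' y y' : X) (a : x ⟶ x') (b : y ⟶ y'),
    sL₂ p (brd a b) = 𝒞.act (brd (sL p a) b) (eqToHom (mul_assoc p x' y'))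
  brd_sR : ∀ (p x x' y y' : X) (a : x ⟶ x') (b : y ⟶ y'),
    sR₂ (brd a b) p = 𝒞.act (brd a (sR b p)) (eqToHom (mul_assoc x' y' p).symm)
  brd_mid : ∀ (p x x' y y' : X) (a : x ⟶ x') (b : y ⟶ y'),
    brd (sR a p) b = 𝒞.act (brd a (sL p b)) (eqToHom (mul_assoc x' p y').symm)

namespace Braided

variable {X : Type*} [Groupoid X] [Group X] {𝒞 : XMod X}

/-- the costar `K = {a ∈ A₁ : β a = e}` of `A₁` at the identity `e = 1` of `A₀`:
an element is an arrow `a : u ⟶ 1` together with its source `u = α a`. -/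
def K (X : Type*) [Groupoid X] [Group X] : Type _ :=
  Σ u : X, (u ⟶ (1 : X))

/-- the group operation of `K`: the composite (in the composable order) of
`a . (α b)` and `b`; its source is `(α a) * (α b)`, so that `α : K → A₀` is a
homomorphism. -/
def Kop (B : Braided X 𝒞) (k k' : K X) : K X :=
  ⟨k.1 * k'.1, B.sR k.2 k'.1 ≫ eqToHom (one_mul k'.1) ≫ k'.2⟩

/-- the identity `1_e` of `K`. -/
def Kone (X : Type*) [Groupoid X] [Group X] : K X :=
  ⟨1, 𝟙 (1 : X)⟩

/-- the inverse of `k` in the group `K`. -/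
def Kinv (B : Braided X 𝒞) (k : K X) : K X :=
  ⟨k.1⁻¹, eqToHom (one_mul k.1⁻¹).symm ≫ Groupoid.inv (B.sR k.2 k.1⁻¹) ≫
    eqToHom (mul_inv_cancel k.1)⟩

/-- the diagonal (conjugation) action `k ^ p = p⁻¹ . k . p` of `A₀` on `K`. -/
def Kconj (B : Braided X 𝒞) (k : K X) (p : X) : K X :=
  ⟨p⁻¹ * k.1 * p, eqToHom (mul_assoc p⁻¹ k.1 p) ≫ B.sL p⁻¹ (B.sR k.2 p) ≫
    eqToHom (show p⁻¹ * ((1 : X) * p) = 1 by simp)⟩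

/-- the diagonal (conjugation) action `c ^ p = p⁻¹ . c . p` of `A₀` on the
vertex group `A₂(e)`. -/
def Cconj (B : Braided X 𝒞) (c : 𝒞.C (1 : X)) (p : X) : 𝒞.C (1 : X) :=
  𝒞.act (B.sL₂ p⁻¹ (B.sR₂ c p)) (eqToHom (show p⁻¹ * ((1 : X) * p) = 1 by simp))

/-- the action `c ! a = (c . α a) ^ a` of `K` on the vertex group `A₂(e)`. -/
def bang (B : Braided X 𝒞) (c : 𝒞.C (1 : X)) (k : K X) : 𝒞.C (1 : X) :=
  𝒞.act (B.sR₂ c k.1) (eqToHom (one_mul k.1) ≫ k.2)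

/-- the inclusion of the vertex group `A₁(e)` into `K`. -/
def iota (a : (1 : X) ⟶ (1 : X)) : K X := ⟨1, a⟩

end Braided

open Braided

/-! Right translation `a ↦ a.p` is a functor on `A₁` and an action of the group `A₀`, and the
product in `K` is `a.(α b) ≫ b`.  Associativity and the unit laws then follow from
functoriality and the action laws alone, and the inverse of `a : u ⟶ 1` is
`(a.u⁻¹)⁻¹ : u⁻¹ ⟶ 1`, because `(a.u⁻¹).u = a` up to the identifications of objects. -/

namespace Braided

variable {X : Type*} [Groupoid X] [Group X] {𝒞 : XMod X} (B : Braided X 𝒞)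

theorem K.ext {k k' : K X} (h : k.1 = k'.1) (h' : k.2 = eqToHom h ≫ k'.2) : k = k' := by
  obtain ⟨u, a⟩ := k
  obtain ⟨v, b⟩ := k'
  dsimp only at h
  subst h
  simp only [eqToHom_refl, Category.id_comp] at h'
  rw [h']

def rightTranslation (p : X) : X ⥤ X where
  obj x := x * p
  map a := B.sR a p
  map_id x := B.sR_id p x
  map_comp a b := B.sR_comp p _ _ _ a b

theorem sR_eqToHom {x y : X} (h : x = y) (p : X) :
    B.sR (eqToHom h) p = eqToHom (congrArg (· * p) h) :=
  eqToHom_map (B.rightTranslation p) h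

theorem sR_inv {x y : X} (a : x ⟶ y) (p : X) : B.sR (inv a) p = inv (B.sR a p) :=
  (B.rightTranslation p).map_inv a

theorem sR_of_eq_one {x y : X} (a : x ⟶ y) {q : X} (hq : q = 1) :
    B.sR a q = eqToHom (by rw [hq, mul_one]) ≫ a ≫ eqToHom (by rw [hq, mul_one]) := by
  subst hq
  exact B.sR_one x y a

theorem sR_sR_inv {x y : X} (a : x ⟶ y) (p : X) :
    B.sR (B.sR a p⁻¹) p =
      eqToHom (inv_mul_cancel_right x p) ≫ a ≫ eqToHom (inv_mul_cancel_right y p).symm := by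
  have h := B.sR_mul p⁻¹ p x y a
  rw [B.sR_of_eq_one a (inv_mul_cancel p)] at h
  rw [eq_comm, eqToHom_comp_iff, comp_eqToHom_iff] at h
  simpa using h

theorem Kop_assoc (k₁ k₂ k₃ : K X) : B.Kop (B.Kop k₁ k₂) k₃ = B.Kop k₁ (B.Kop k₂ k₃) := by
  obtain ⟨u, a⟩ := k₁
  refine K.ext (mul_assoc u k₂.1 k₃.1) ?_
  simp [Kop, B.sR_comp, B.sR_mul, sR_eqToHom]

theorem Kone_Kop (k : K X) : B.Kop (Kone X) k = k :=
  K.ext (one_mul k.1) (by simp [Kop, Kone, B.sR_id])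

theorem Kop_Kone (k : K X) : B.Kop k (Kone X) = k :=
  K.ext (mul_one k.1) (by simp [Kop, Kone, B.sR_one])

theorem Kop_Kinv (k : K X) : B.Kop k (B.Kinv k) = Kone X :=
  K.ext (mul_inv_cancel k.1) (by simp [Kop, Kinv, Kone])

theorem Kinv_Kop (k : K X) : B.Kop (B.Kinv k) k = Kone X := by
  refine K.ext (inv_mul_cancel k.1) ?_
  simp [Kop, Kinv, Kone, B.sR_comp, sR_eqToHom, Groupoid.inv_eq_inv, sR_inv, sR_sR_inv]

theorem Kop_vertex (a b : (1 : X) ⟶ (1 : X)) :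
    B.Kop ⟨1, a⟩ ⟨1, b⟩ = ⟨1 * 1, eqToHom (mul_one (1 : X)) ≫ a ≫ b⟩ :=
  K.ext rfl (by
    simp only [Kop, B.sR_one, Category.assoc, eqToHom_trans_assoc, eqToHom_refl,
      Category.id_comp]
    exact (eqToHom_trans_assoc _ _ _).symm)

theorem K.fst_eq_one_iff (k : K X) : k.1 = 1 ↔ ∃ a : (1 : X) ⟶ (1 : X), k = ⟨1, a⟩ := by
  obtain ⟨u, a⟩ := k
  constructor
  · rintro rfl
    exact ⟨a, rfl⟩
  · rintro ⟨b, hb⟩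
    rw [hb]

end Braided

/-- **Statement 15.** Let `𝒜 = (A₂, A₁, δ)` be a braided regular crossed module with
group of objects `A₀` (identity `e = 1`), and let `K` be the costar at `e`.  Then the
operation `a·b` (the composite of `a.(α b)` and `b`) makes `K` a group with identity
the identity arrow `1_e`; the source map `α : K → A₀` is a group homomorphism; the
vertex group `A₁(e)` is a subgroup of `K` (with the induced operation extending
composition in `A₁(e)`), namely the kernel of `α`; and `α` is equivariant for the
diagonal action `a ^ p = p⁻¹.a.p` of `A₀` on `K` and conjugation of `A₀` on itself. -/
theorem costar_group {X : Type*} [Groupoid X] [Group X] {𝒞 : XMod X}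
    (B : Braided X 𝒞) :
    -- `K` is a group with identity `1_e`:
    (∀ k₁ k₂ k₃ : K X, B.Kop (B.Kop k₁ k₂) k₃ = B.Kop k₁ (B.Kop k₂ k₃)) ∧
    (∀ k : K X, B.Kop (Kone X) k = k) ∧
    (∀ k : K X, B.Kop k (Kone X) = k) ∧
    (∀ k : K X, ∃ k' : K X, B.Kop k k' = Kone X ∧ B.Kop k' k = Kone X) ∧
    -- the source map `α : K → A₀` is a group homomorphism:
    (∀ k k' : K X, (B.Kop k k').1 = k.1 * k'.1) ∧
    ((Kone X).1 = (1 : X)) ∧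
    -- the vertex group `A₁(e)` is a subgroup of `K`, with the induced operation
    -- extending the composition of `A₁(e)`:
    (∀ a b : (1 : X) ⟶ (1 : X),
      B.Kop ⟨1, a⟩ ⟨1, b⟩ = ⟨1 * 1, eqToHom (mul_one (1 : X)) ≫ a ≫ b⟩) ∧
    -- `A₁(e)` is the kernel of `α`:
    (∀ k : K X, k.1 = 1 ↔ ∃ a : (1 : X) ⟶ (1 : X), k = ⟨1, a⟩) ∧
    -- `α` is equivariant with respect to the diagonal action of `A₀` on `K` and the
    -- conjugation action of `A₀` on itself:
    (∀ (k : K X) (p : X), (B.Kconj k p).1 = p⁻¹ * k.1 * p) :=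
  ⟨B.Kop_assoc, B.Kone_Kop, B.Kop_Kone, fun k => ⟨B.Kinv k, B.Kop_Kinv k, B.Kinv_Kop k⟩,
    fun _ _ => rfl, rfl, B.Kop_vertex, K.fst_eq_one_iff, fun _ _ => rfl⟩
end
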